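/- Along the x-axis the second-order non-symmetric rogue wave reduces to the real rational function q^[2](x,0) = (16x⁶ − 48x⁵ + 24x⁴ + 24x³ − 72x² + 36x + 9)/H2(x,0), with H2(x,0) = 16x⁶ − 48x⁵ + 72x⁴ − 72x³ + 72x² − 36x + 9 > 0, and the set of real zeros of q^[2](·,0), i.e. the set { x ∈ ℝ : 16x⁶ − 48x⁵ + 24x⁴ + 24x³ − 72x² + 36x + 9 = 0 }, has exactly four elements. That is, the non-symmetric second-order rogue wave has exactly four zero-amplitude points on the x-axis, but (unlike the symmetric case) they are not distributed symmetrically about x = 0. -/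

import Mathlib

/-!
At `t = 0` the polynomial `A` vanishes, so `F2(x, 0) = -12√2 B(x)` is real and
`q^[2](x, 0) = 1 - 24 B(x) / H2(x, 0)`; completing squares around `x = 1/2` shows `H2(x, 0) > 0`.
The numerator `P = H2(·, 0) - 24 B` changes sign near `-1.12, -0.18, 0.84, 2.36`. The line splits
into four intervals around these points, on each of which `P` is strictly monotone (sign of `P'`),
and three gaps between them, on which `P` has a strict sign; so each sign change is the only zero
of its interval and there are no others.
-/

open Complex

noncomputable section

/-- The denominator `H2` of the second-order non-symmetric rogue wave. -/
def H2 (x t : ℝ) : ℝ :=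
  1024 * t ^ 6 + 768 * x ^ 2 * t ^ 4 - 768 * t ^ 4 * x + 1920 * t ^ 4
    + 192 * x ^ 4 * t ^ 2 - 384 * x ^ 3 * t ^ 2 + 288 * x * t ^ 2 + 288 * t ^ 2
    + 16 * x ^ 6 - 48 * x ^ 5 + 72 * x ^ 4 - 72 * x ^ 3 + 72 * x ^ 2 - 36 * x + 9

/-- The numerator `F2` of the second-order non-symmetric rogue wave:
`F2 = 12i√2·(A + i·B)` with real polynomials `A`, `B`. -/
def F2 (x t : ℝ) : ℂ :=
  12 * Complex.I * ((Real.sqrt 2 : ℝ) : ℂ) *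
    (((12 * t - 32 * t ^ 3 - 12 * x * t + 16 * x ^ 3 * t + 64 * t ^ 3 * x - 8 * x ^ 4 * t
          - 64 * x ^ 2 * t ^ 3 - 128 * t ^ 5 : ℝ) : ℂ)
      + Complex.I *
        ((48 * x ^ 2 * t ^ 2 - 4 * x ^ 3 + 6 * x ^ 2 + 160 * t ^ 4 - 48 * x * t ^ 2
            + 48 * t ^ 2 + 2 * x ^ 4 - 3 * x : ℝ) : ℂ))

/-- The second-order non-symmetric doubly-localized rogue wave
`q^[2](x,t) = √2·(√2/2 + F2/H2)·e^{2it}` of the focusing NLS equation. -/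
def qtwo (p : ℝ × ℝ) : ℂ :=
  ((Real.sqrt 2 : ℝ) : ℂ)
    * (((Real.sqrt 2 / 2 : ℝ) : ℂ) + F2 p.1 p.2 / ((H2 p.1 p.2 : ℝ) : ℂ))
    * Complex.exp (2 * Complex.I * (p.2 : ℂ))

open Set

/-- The numerator of `q^[2](x, 0)`. -/
def qtwoAxisNum (x : ℝ) : ℝ :=
  16 * x ^ 6 - 48 * x ^ 5 + 24 * x ^ 4 + 24 * x ^ 3 - 72 * x ^ 2 + 36 * x + 9

theorem H2_x_axis_eq_sum_sq (x : ℝ) :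
    H2 x 0 = 16 * (x - 1 / 2) ^ 6 + 12 * ((x - 1 / 2) ^ 2 - (x - 1 / 2) / 3) ^ 2
      + 77 / 3 * (x - 1 / 2 + 9 / 77) ^ 2 + 893 / 308 := by
  unfold H2
  ring

theorem H2_x_axis_pos (x : ℝ) : 0 < H2 x 0 := by
  rw [H2_x_axis_eq_sum_sq]
  positivity

theorem F2_x_axis (x : ℝ) :
    F2 x 0 = ((-(12 * √2 * (2 * x ^ 4 - 4 * x ^ 3 + 6 * x ^ 2 - 3 * x)) : ℝ) : ℂ) := by
  unfold F2
  push_cast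
  linear_combination (12 * √2 * (2 * x ^ 4 - 4 * x ^ 3 + 6 * x ^ 2 - 3 * x) : ℂ) * I_sq

theorem qtwo_x_axis (x : ℝ) :
    qtwo (x, 0) =
      ((1 - 24 * (2 * x ^ 4 - 4 * x ^ 3 + 6 * x ^ 2 - 3 * x) / H2 x 0 : ℝ) : ℂ) := by
  have hsqrt : √2 * √2 = 2 := Real.mul_self_sqrt zero_le_two
  simp only [qtwo, F2_x_axis, ofReal_zero, mul_zero, exp_zero, mul_one]
  norm_cast
  linear_combination (1 / 2 - 12 * (2 * x ^ 4 - 4 * x ^ 3 + 6 * x ^ 2 - 3 * x) / H2 x 0) * hsqrt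

theorem exists_mem_Icc_eq_zero_of_mul_nonpos {f : ℝ → ℝ} {a b : ℝ} (hab : a ≤ b)
    (hf : ContinuousOn f (Icc a b)) (hsign : f a * f b ≤ 0) : ∃ r ∈ Icc a b, f r = 0 := by
  have hzero : (0 : ℝ) ∈ uIcc (f a) (f b) :=
    mem_uIcc.2 ((mul_nonpos_iff.1 hsign).symm.imp id And.symm)
  simpa [uIcc_of_le hab] using intermediate_value_uIcc (uIcc_of_le hab ▸ hf) hzero

theorem continuous_qtwoAxisNum : Continuous qtwoAxisNum := by
  unfold qtwoAxisNum
  fun_prop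

theorem deriv_qtwoAxisNum (x : ℝ) :
    deriv qtwoAxisNum x = 96 * x ^ 5 - 240 * x ^ 4 + 96 * x ^ 3 + 72 * x ^ 2 - 144 * x + 36 := by
  unfold qtwoAxisNum
  simp (disch := fun_prop) only [deriv_fun_add, deriv_fun_sub, deriv_const_mul_field',
    deriv_fun_pow, deriv_id'', deriv_const, deriv_const_mul_id']
  ring

theorem qtwoAxisNum_strictAntiOn_Iic : StrictAntiOn qtwoAxisNum (Iic (-1)) := by
  refine strictAntiOn_of_deriv_neg (convex_Iic _) continuous_qtwoAxisNum.continuousOn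
    fun x hx => ?_
  rw [interior_Iic, mem_Iio] at hx
  rw [deriv_qtwoAxisNum]
  nlinarith [sq_nonneg (x + 1), sq_nonneg (x ^ 2 + x),
    mul_nonneg (mul_nonneg (sq_nonneg (x + 1)) (sq_nonneg x)) (show 0 ≤ -x by linarith)]

theorem qtwoAxisNum_strictMonoOn_Icc : StrictMonoOn qtwoAxisNum (Icc (-3 / 4) (1 / 4)) := by
  refine strictMonoOn_of_deriv_pos (convex_Icc _ _) continuous_qtwoAxisNum.continuousOn
    fun x hx => ?_
  rw [interior_Icc, mem_Ioo] at hx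
  rw [deriv_qtwoAxisNum]
  nlinarith [mul_pos (sub_pos.2 hx.1) (sub_pos.2 hx.2), sq_nonneg x, sq_nonneg (x ^ 2 - x),
    sq_nonneg (x ^ 2 + x)]

theorem qtwoAxisNum_strictAntiOn_Icc : StrictAntiOn qtwoAxisNum (Icc (1 / 2) (9 / 5)) := by
  refine strictAntiOn_of_deriv_neg (convex_Icc _ _) continuous_qtwoAxisNum.continuousOn
    fun x hx => ?_
  rw [interior_Icc, mem_Ioo] at hx
  rw [deriv_qtwoAxisNum]
  nlinarith [mul_pos (sub_pos.2 hx.1) (sub_pos.2 hx.2), sq_nonneg (x - 1), sq_nonneg (x ^ 2 - x),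
    sq_nonneg (x ^ 2 - 2 * x)]

theorem qtwoAxisNum_strictMonoOn_Ici : StrictMonoOn qtwoAxisNum (Ici (21 / 10)) := by
  refine strictMonoOn_of_deriv_pos (convex_Ici _) continuous_qtwoAxisNum.continuousOn
    fun x hx => ?_
  rw [interior_Ici, mem_Ioi] at hx
  rw [deriv_qtwoAxisNum]
  nlinarith [sq_nonneg (x - 21 / 10), sq_nonneg (x - 3), sq_nonneg (x ^ 2 - 2 * x)]

theorem qtwoAxisNum_neg_of_mem_left_gap {x : ℝ} (h₁ : -1 ≤ x) (h₂ : x ≤ -3 / 4) :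
    qtwoAxisNum x < 0 := by
  unfold qtwoAxisNum
  nlinarith [mul_nonneg (sub_nonneg.2 h₁) (sub_nonneg.2 h₂), sq_nonneg (x ^ 2 + x),
    sq_nonneg (x + 7 / 8)]

theorem qtwoAxisNum_pos_of_mem_middle_gap {x : ℝ} (h₁ : 1 / 4 ≤ x) (h₂ : x ≤ 1 / 2) :
    0 < qtwoAxisNum x := by
  unfold qtwoAxisNum
  nlinarith [mul_nonneg (sub_nonneg.2 h₁) (sub_nonneg.2 h₂), sq_nonneg (x ^ 2 - x)]

theorem qtwoAxisNum_neg_of_mem_right_gap {x : ℝ} (h₁ : 9 / 5 ≤ x) (h₂ : x ≤ 21 / 10) :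
    qtwoAxisNum x < 0 := by
  unfold qtwoAxisNum
  nlinarith [mul_nonneg (sub_nonneg.2 h₁) (sub_nonneg.2 h₂), sq_nonneg (x - 2),
    sq_nonneg (x ^ 2 - 2 * x)]

theorem mem_monotone_pieces_of_qtwoAxisNum_eq_zero {x : ℝ} (hx : qtwoAxisNum x = 0) :
    x ∈ Iic (-1) ∨ x ∈ Icc (-3 / 4) (1 / 4) ∨ x ∈ Icc (1 / 2) (9 / 5) ∨
      x ∈ Ici (21 / 10) := by
  rcases le_or_gt x (-1) with h₁ | h₁
  · exact Or.inl h₁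
  rcases le_or_gt x (-3 / 4) with h₂ | h₂
  · exact absurd hx (qtwoAxisNum_neg_of_mem_left_gap h₁.le h₂).ne
  rcases le_or_gt x (1 / 4) with h₃ | h₃
  · exact Or.inr (Or.inl ⟨h₂.le, h₃⟩)
  rcases le_or_gt x (1 / 2) with h₄ | h₄
  · exact absurd hx (qtwoAxisNum_pos_of_mem_middle_gap h₃.le h₄).ne'
  rcases le_or_gt x (9 / 5) with h₅ | h₅
  · exact Or.inr (Or.inr (Or.inl ⟨h₄.le, h₅⟩))
  rcases le_or_gt x (21 / 10) with h₆ | h₆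
  · exact absurd hx (qtwoAxisNum_neg_of_mem_right_gap h₅.le h₆).ne
  · exact Or.inr (Or.inr (Or.inr h₆.le))

theorem ncard_qtwoAxisNum_zeros : {x | qtwoAxisNum x = 0}.ncard = 4 := by
  obtain ⟨r₁, ⟨-, hr₁⟩, hr₁0⟩ : ∃ r ∈ Icc (-2 : ℝ) (-1), qtwoAxisNum r = 0 :=
    exists_mem_Icc_eq_zero_of_mul_nonpos (by norm_num) continuous_qtwoAxisNum.continuousOn
      (by norm_num [qtwoAxisNum])
  obtain ⟨r₂, hr₂, hr₂0⟩ : ∃ r ∈ Icc (-3 / 4 : ℝ) (1 / 4), qtwoAxisNum r = 0 :=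
    exists_mem_Icc_eq_zero_of_mul_nonpos (by norm_num) continuous_qtwoAxisNum.continuousOn
      (by norm_num [qtwoAxisNum])
  obtain ⟨r₃, hr₃, hr₃0⟩ : ∃ r ∈ Icc (1 / 2 : ℝ) (9 / 5), qtwoAxisNum r = 0 :=
    exists_mem_Icc_eq_zero_of_mul_nonpos (by norm_num) continuous_qtwoAxisNum.continuousOn
      (by norm_num [qtwoAxisNum])
  obtain ⟨r₄, ⟨hr₄, -⟩, hr₄0⟩ : ∃ r ∈ Icc (21 / 10 : ℝ) 3, qtwoAxisNum r = 0 :=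
    exists_mem_Icc_eq_zero_of_mul_nonpos (by norm_num) continuous_qtwoAxisNum.continuousOn
      (by norm_num [qtwoAxisNum])
  have hzeros : ∀ x, qtwoAxisNum x = 0 → x = r₁ ∨ x = r₂ ∨ x = r₃ ∨ x = r₄ := by
    intro x hx
    rcases mem_monotone_pieces_of_qtwoAxisNum_eq_zero hx with h | h | h | h
    · exact Or.inl (qtwoAxisNum_strictAntiOn_Iic.injOn h hr₁ (hx.trans hr₁0.symm))
    · exact Or.inr (Or.inl (qtwoAxisNum_strictMonoOn_Icc.injOn h hr₂ (hx.trans hr₂0.symm)))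
    · exact Or.inr (Or.inr (Or.inl
        (qtwoAxisNum_strictAntiOn_Icc.injOn h hr₃ (hx.trans hr₃0.symm))))
    · exact Or.inr (Or.inr (Or.inr
        (qtwoAxisNum_strictMonoOn_Ici.injOn h hr₄ (hx.trans hr₄0.symm))))
  refine ncard_eq_four.2 ⟨r₁, r₂, r₃, r₄, ?_, ?_, ?_, ?_, ?_, ?_, ?_⟩
  iterate 6 exact ne_of_lt (by linarith [hr₂.1, hr₂.2, hr₃.1, hr₃.2])
  ext x
  exact ⟨hzeros x, by rintro (rfl | rfl | rfl | rfl) <;> assumption⟩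

/-- along the `x`-axis the second-order non-symmetric rogue wave reduces to
the real rational function
`q^[2](x,0) = (16x⁶ − 48x⁵ + 24x⁴ + 24x³ − 72x² + 36x + 9)/H2(x,0)`, with
`H2(x,0) = 16x⁶ − 48x⁵ + 72x⁴ − 72x³ + 72x² − 36x + 9 > 0`, and the set of its real zeros
has exactly four elements (not distributed symmetrically about `x = 0`). -/
theorem qtwo_zeros_on_x_axis :
    (∀ x : ℝ,
      qtwo (x, 0)
        = (((16 * x ^ 6 - 48 * x ^ 5 + 24 * x ^ 4 + 24 * x ^ 3 - 72 * x ^ 2 + 36 * x + 9)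
            / H2 x 0 : ℝ) : ℂ)) ∧
    (∀ x : ℝ,
      H2 x 0 = 16 * x ^ 6 - 48 * x ^ 5 + 72 * x ^ 4 - 72 * x ^ 3 + 72 * x ^ 2 - 36 * x + 9 ∧
      H2 x 0 > 0) ∧
    Set.ncard {x : ℝ |
      16 * x ^ 6 - 48 * x ^ 5 + 24 * x ^ 4 + 24 * x ^ 3 - 72 * x ^ 2 + 36 * x + 9 = 0} = 4 := by
  refine ⟨fun x => ?_, fun x => ⟨by unfold H2; ring, H2_x_axis_pos x⟩,
    ncard_qtwoAxisNum_zeros⟩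
  rw [qtwo_x_axis]
  congr 1
  field_simp [(H2_x_axis_pos x).ne']
  unfold H2
  ring
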